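/- arXiv:1010.4662 — 3 statements merged into one kernel-verified Lean document; each statement's English description precedes it below -/
import Mathlib

section
/- (Markov gluing of measures) Let B be the Boolean algebra freely generated by A_1,…,A_n, B_1 the subalgebra generated by A_1,…,A_k and B_2 the subalgebra generated by A_i,…,A_n with 1 ≤ i ≤ k ≤ n. If μ_1 and μ_2 are normalized measures on B_1, B_2 that coincide on B_1 ∩ B_2, then there is a normalized measure μ on B extending both. -/
def IsNormMeasure {B : Type*} [BooleanAlgebra B] (m : B → ℝ) : Prop :=
  (∀ x, 0 ≤ m x) ∧ (∀ x y : B, x ⊓ y = ⊥ → m (x ⊔ y) = m x + m y) ∧ m ⊤ = 1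

def IsMeasureOn {B : Type*} [BooleanAlgebra B] (m : B → ℝ) (S : Set B) : Prop :=
  (∀ x ∈ S, 0 ≤ m x) ∧
  (∀ x ∈ S, ∀ y ∈ S, x ⊓ y = ⊥ → m (x ⊔ y) = m x + m y) ∧ m ⊤ = 1

def subalgClosure {B : Type*} [BooleanAlgebra B] (G : Set B) : Set B :=
  ⋂₀ {S : Set B | G ⊆ S ∧ (⊤ : B) ∈ S ∧ (⊥ : B) ∈ S ∧ (∀ x ∈ S, xᶜ ∈ S) ∧
      (∀ x ∈ S, ∀ y ∈ S, x ⊓ y ∈ S) ∧ (∀ x ∈ S, ∀ y ∈ S, x ⊔ y ∈ S)}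

def IsFreelyGeneratedBy {n : ℕ} {B : Type*} [BooleanAlgebra B] (A : Fin n → B) : Prop :=
  ∀ (C : Type) [BooleanAlgebra C], ∀ g : Fin n → C,
    ∃! φ : BoundedLatticeHom B C, ∀ i, φ (A i) = g i

/-!
Freeness gives a lattice homomorphism `φ` from `B` to sets of sign vectors `ε : Fin n → Bool`
with `φ (A j) = {ε | ε j}`. An element of the subalgebra generated by `A j, j ∈ S` is the
disjoint union of the atoms `⨅ j ∈ S, ±A j` below it, and these are exactly the atoms whose sign
vector lies in its image under `φ`; so a finitely additive function on that subalgebra is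
determined by its values on atoms. Because the two index sets cover all coordinates, the
conditional-independence density `f ε = μ₁(atom₁ ε) μ₂(atom₂ ε) / μ₁(atom₁₂ ε)` has the
atom masses of `μ₁` and `μ₂` as its two marginals (when the denominator vanishes so does the
numerator, by monotonicity), and `μ x = ∑ ε ∈ φ x, f ε` is the common extension.
-/

open Finset

lemma subalgClosure_eq_closure {B : Type*} [BooleanAlgebra B] (G : Set B) :
    subalgClosure G = BooleanSubalgebra.closure G := by
  refine le_antisymm (Set.sInter_subset_of_mem ?_) fun x hx => Set.mem_sInter.2 ?_
  · exact ⟨BooleanSubalgebra.subset_closure, BooleanSubalgebra.top_mem, BooleanSubalgebra.bot_mem,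
      fun _ => BooleanSubalgebra.compl_mem, fun _ hx _ hy => BooleanSubalgebra.inf_mem hx hy,
      fun _ hx _ hy => BooleanSubalgebra.sup_mem hx hy⟩
  · rintro S ⟨hG, -, hbot, hcompl, hinf, hsup⟩
    let L : BooleanSubalgebra B :=
      { carrier := S
        supClosed' := fun _ hx _ hy => hsup _ hx _ hy
        infClosed' := fun _ hx _ hy => hinf _ hx _ hy
        bot_mem' := hbot
        compl_mem' := fun hx => hcompl _ hx }
    exact (BooleanSubalgebra.closure_le (L := L)).2 hG hx

section Additive

variable {B : Type*} [BooleanAlgebra B]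

def IsAdditiveOn (m : B → ℝ) (S : Set B) : Prop :=
  ∀ x ∈ S, ∀ y ∈ S, x ⊓ y = ⊥ → m (x ⊔ y) = m x + m y

variable {L : BooleanSubalgebra B} {m : B → ℝ}

lemma IsAdditiveOn.map_bot (hm : IsAdditiveOn m L) : m ⊥ = 0 := by
  have h := hm ⊥ L.bot_mem ⊥ L.bot_mem (inf_idem _)
  rw [sup_idem] at h
  linarith

lemma IsAdditiveOn.map_finsetSup (hm : IsAdditiveOn m L) {α : Type*} [DecidableEq α]
    {s : Finset α} {a : α → B} (ha : ∀ p ∈ s, a p ∈ L) (hd : (s : Set α).PairwiseDisjoint a) :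
    m (s.sup a) = ∑ p ∈ s, m (a p) := by
  induction s using Finset.induction_on with
  | empty => simpa using hm.map_bot
  | insert p s hp ih =>
    have hs : ∀ q ∈ s, a q ∈ L := fun q hq => ha q (mem_insert_of_mem hq)
    have hdisj : Disjoint (a p) (s.sup a) := Finset.disjoint_sup_right.2 fun q hq =>
      hd (mem_insert_self p s) (mem_insert_of_mem hq) (ne_of_mem_of_not_mem hq hp).symm
    rw [sup_insert, sum_insert hp, hm _ (ha p (mem_insert_self p s)) _
      (Finset.sup_mem _ L.bot_mem (fun _ hx _ hy => L.sup_mem hx hy) s a hs) hdisj.eq_bot,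
      ih hs (hd.subset (by simp))]

lemma IsMeasureOn.mono (hm : IsMeasureOn m L) {x y : B} (hx : x ∈ L) (hy : y ∈ L) (hxy : x ≤ y) :
    m x ≤ m y := by
  have hsplit := hm.2.1 x hx (y ⊓ xᶜ) (L.inf_mem hy (L.compl_mem hx)) (by
    rw [inf_left_comm, inf_compl_self, inf_bot_eq])
  rw [sup_inf_left, sup_compl_eq_top, inf_top_eq, sup_eq_right.2 hxy] at hsplit
  linarith [hm.1 _ (L.inf_mem hy (L.compl_mem hx))]

end Additive

section Truncate

variable {ι : Type*} [DecidableEq ι]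

def truncate (S : Finset ι) (δ : ι → Bool) : ι → Bool := fun j => if j ∈ S then δ j else false

@[simp] lemma truncate_of_mem {S : Finset ι} {j : ι} (hj : j ∈ S) (δ : ι → Bool) :
    truncate S δ j = δ j := if_pos hj

@[simp] lemma truncate_of_notMem {S : Finset ι} {j : ι} (hj : j ∉ S) (δ : ι → Bool) :
    truncate S δ j = false := if_neg hj

lemma truncate_eq_truncate_iff {S : Finset ι} {δ ε : ι → Bool} :
    truncate S δ = truncate S ε ↔ ∀ j ∈ S, δ j = ε j := by
  refine ⟨fun h j hj => by simpa [hj] using congrFun h j, fun h => funext fun j => ?_⟩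
  by_cases hj : j ∈ S <;> simp [hj, h]

lemma truncate_truncate_of_subset {S₀ S : Finset ι} (h : S₀ ⊆ S) (δ : ι → Bool) :
    truncate S₀ (truncate S δ) = truncate S₀ δ :=
  truncate_eq_truncate_iff.2 fun _ hj => truncate_of_mem (h hj) δ

def patterns [Fintype ι] (S : Finset ι) : Finset (ι → Bool) := univ.image (truncate S)

lemma mem_patterns [Fintype ι] {S : Finset ι} {δ : ι → Bool} :
    δ ∈ patterns S ↔ truncate S δ = δ := by
  refine ⟨fun h => ?_, fun h => mem_image.2 ⟨δ, mem_univ δ, h⟩⟩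
  obtain ⟨ε, -, rfl⟩ := mem_image.1 h
  exact truncate_truncate_of_subset subset_rfl ε

end Truncate

section Atoms

variable {ι B : Type*} [BooleanAlgebra B] (A : ι → B)

def atomOf (S : Finset ι) (δ : ι → Bool) : B := S.inf fun j => if δ j then A j else (A j)ᶜ

variable {A}

lemma atomOf_anti {S₀ S : Finset ι} (h : S₀ ⊆ S) (δ : ι → Bool) : atomOf A S δ ≤ atomOf A S₀ δ :=
  inf_mono h

lemma atomOf_mem_closure (S : Finset ι) (δ : ι → Bool) :
    atomOf A S δ ∈ BooleanSubalgebra.closure (A '' S) := by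
  refine Finset.inf_mem _ BooleanSubalgebra.top_mem
    (fun _ hx _ hy => BooleanSubalgebra.inf_mem hx hy) S _ fun j hj => ?_
  have hA := BooleanSubalgebra.subset_closure (Set.mem_image_of_mem A (mem_coe.2 hj))
  split_ifs
  exacts [hA, BooleanSubalgebra.compl_mem hA]

lemma atomOf_mem_closure_of_subset {S₀ S : Finset ι} (h : S₀ ⊆ S) (δ : ι → Bool) :
    atomOf A S₀ δ ∈ BooleanSubalgebra.closure (A '' S) :=
  BooleanSubalgebra.closure_mono (Set.image_mono (coe_subset.2 h)) (atomOf_mem_closure S₀ δ)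

lemma atomOf_le_or_disjoint {S : Finset ι} {x : B} (hx : x ∈ BooleanSubalgebra.closure (A '' S))
    (δ : ι → Bool) : atomOf A S δ ≤ x ∨ Disjoint (atomOf A S δ) x := by
  induction hx using BooleanSubalgebra.closure_bot_sup_induction with
  | mem x hx =>
    obtain ⟨j, hj, rfl⟩ := hx
    have hle : atomOf A S δ ≤ if δ j then A j else (A j)ᶜ := inf_le hj
    cases hδ : δ j
    · exact .inr (le_compl_iff_disjoint_right.1 (by simpa [hδ] using hle))
    · exact .inl (by simpa [hδ] using hle)
  | bot => exact .inr disjoint_bot_right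
  | sup x _ y _ hx hy =>
    rcases hx with hx | hx
    · exact .inl (le_sup_of_le_left hx)
    rcases hy with hy | hy
    · exact .inl (le_sup_of_le_right hy)
    · exact .inr (disjoint_sup_right.2 ⟨hx, hy⟩)
  | compl x _ hx =>
    rcases hx with hx | hx
    · exact .inr (disjoint_compl_right_iff.2 hx)
    · exact .inl (le_compl_iff_disjoint_right.2 hx)

variable [DecidableEq ι]

lemma atomOf_eq_of_truncate_eq {S : Finset ι} {δ ε : ι → Bool} (h : truncate S δ = truncate S ε) :
    atomOf A S δ = atomOf A S ε :=
  inf_congr rfl fun j hj => by rw [truncate_eq_truncate_iff.1 h j hj]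

@[simp] lemma atomOf_truncate (S : Finset ι) (δ : ι → Bool) :
    atomOf A S (truncate S δ) = atomOf A S δ :=
  atomOf_eq_of_truncate_eq (truncate_truncate_of_subset subset_rfl δ)

lemma disjoint_atomOf {S : Finset ι} {δ ε : ι → Bool} (h : truncate S δ ≠ truncate S ε) :
    Disjoint (atomOf A S δ) (atomOf A S ε) := by
  obtain ⟨j, hj, hne⟩ : ∃ j ∈ S, δ j ≠ ε j := by
    by_contra! h'
    exact h (truncate_eq_truncate_iff.2 h')
  refine Disjoint.mono (inf_le hj) (inf_le hj) ?_
  cases hδ : δ j <;> cases hε : ε j <;> simp_all [disjoint_compl_left, disjoint_compl_right]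

lemma sup_atomOf [Fintype ι] (S : Finset ι) : univ.sup (atomOf A S) = ⊤ := by
  induction S using Finset.induction_on with
  | empty => exact sup_const univ_nonempty ⊤
  | insert j S hj ih =>
    refine top_le_iff.1 (ih ▸ Finset.sup_le fun δ _ => ?_)
    have hsplit (b : Bool) : atomOf A (insert j S) (Function.update δ j b) =
        (if b then A j else (A j)ᶜ) ⊓ atomOf A S δ := by
      rw [atomOf, inf_insert, Function.update_self]
      congr 1
      exact inf_congr rfl fun m hm => by rw [Function.update_of_ne (ne_of_mem_of_not_mem hm hj)]
    calc atomOf A S δ = (A j ⊓ atomOf A S δ) ⊔ ((A j)ᶜ ⊓ atomOf A S δ) := by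
          rw [← inf_sup_right, sup_compl_eq_top, top_inf_eq]
      _ ≤ _ := sup_le (hsplit true ▸ le_sup (mem_univ _)) (hsplit false ▸ le_sup (mem_univ _))

end Atoms

section Representation

variable {ι B : Type*} [DecidableEq ι] [BooleanAlgebra B] {A : ι → B}
  {φ : BoundedLatticeHom B (Set (ι → Bool))}

lemma map_atomOf (hφ : ∀ j, φ (A j) = {ε | ε j = true}) (S : Finset ι) (δ : ι → Bool) :
    φ (atomOf A S δ) = {ε | truncate S ε = truncate S δ} := by
  ext ε
  simp only [atomOf, map_finset_inf, inf_set_eq_iInter, Set.mem_iInter, Set.mem_ofPred_eq,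
    truncate_eq_truncate_iff]
  refine forall₂_congr fun j _ => ?_
  cases hδ : δ j <;> simp [hδ, hφ]

lemma atomOf_le_iff (hφ : ∀ j, φ (A j) = {ε | ε j = true}) {S : Finset ι} {x : B}
    (hx : x ∈ BooleanSubalgebra.closure (A '' S)) (δ : ι → Bool) :
    atomOf A S δ ≤ x ↔ δ ∈ φ x := by
  have hδ : δ ∈ φ (atomOf A S δ) := by simp [map_atomOf hφ]
  refine ⟨fun h => OrderHomClass.mono φ h hδ, fun h => ?_⟩
  refine (atomOf_le_or_disjoint hx δ).resolve_right fun hdisj => ?_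
  have : δ ∈ φ (atomOf A S δ ⊓ x) := by rw [map_inf]; exact ⟨hδ, h⟩
  rwa [hdisj.eq_bot, map_bot] at this

variable [Fintype ι]

open scoped Classical in
lemma IsAdditiveOn.eq_sum_atomOf (hφ : ∀ j, φ (A j) = {ε | ε j = true}) {S : Finset ι}
    {m : B → ℝ} (hm : IsAdditiveOn m (BooleanSubalgebra.closure (A '' S))) {x : B}
    (hx : x ∈ BooleanSubalgebra.closure (A '' S)) :
    m x = ∑ δ ∈ (patterns S).filter (· ∈ φ x), m (atomOf A S δ) := by
  have hcover : (patterns S).sup (fun δ => x ⊓ atomOf A S δ) = x := by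
    rw [← sup_inf_distrib_left, patterns, sup_image, Function.comp_def]
    simp [sup_atomOf]
  have hdisj : ((patterns S : Set (ι → Bool))).PairwiseDisjoint fun δ => x ⊓ atomOf A S δ := by
    intro δ hδ ε hε hne
    refine (disjoint_atomOf ?_).mono inf_le_right inf_le_right
    rwa [mem_patterns.1 hδ, mem_patterns.1 hε]
  have hpiece (δ : ι → Bool) : m (x ⊓ atomOf A S δ) = if δ ∈ φ x then m (atomOf A S δ) else 0 := by
    split_ifs with h
    · rw [inf_eq_right.2 ((atomOf_le_iff hφ hx δ).2 h)]
    · rw [((atomOf_le_or_disjoint hx δ).resolve_left (mt (atomOf_le_iff hφ hx δ).1 h)).symm.eq_bot,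
        hm.map_bot]
  conv_lhs => rw [← hcover]
  rw [hm.map_finsetSup (fun δ _ => BooleanSubalgebra.inf_mem hx (atomOf_mem_closure S δ))
    hdisj, sum_filter]
  exact sum_congr rfl fun δ _ => hpiece δ

lemma IsAdditiveOn.map_atomOf_eq_sum (hφ : ∀ j, φ (A j) = {ε | ε j = true}) {S₀ S : Finset ι}
    (hS₀ : S₀ ⊆ S) {m : B → ℝ} (hm : IsAdditiveOn m (BooleanSubalgebra.closure (A '' S)))
    (δ : ι → Bool) :
    m (atomOf A S₀ δ) = ∑ δ' ∈ (patterns S).filter (fun δ' => truncate S₀ δ' = truncate S₀ δ),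
      m (atomOf A S δ') := by
  classical
  rw [hm.eq_sum_atomOf hφ (atomOf_mem_closure_of_subset hS₀ δ)]
  exact sum_congr (filter_congr fun _ _ => by rw [map_atomOf hφ]; rfl) fun _ _ => rfl

lemma IsAdditiveOn.eqOn_of_atomOf (hφ : ∀ j, φ (A j) = {ε | ε j = true}) {S : Finset ι}
    {m m' : B → ℝ} (hm : IsAdditiveOn m (BooleanSubalgebra.closure (A '' S)))
    (hm' : IsAdditiveOn m' (BooleanSubalgebra.closure (A '' S)))
    (h : ∀ δ, m (atomOf A S δ) = m' (atomOf A S δ)) :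
    Set.EqOn m m' (BooleanSubalgebra.closure (A '' S)) := fun x hx => by
  rw [hm.eq_sum_atomOf hφ hx, hm'.eq_sum_atomOf hφ hx]
  exact sum_congr rfl fun δ _ => h δ

end Representation

section Gluing

variable {ι : Type*} [DecidableEq ι]

-- Where `g₀` vanishes this is `0` (division by zero); `sum_glue_fiber` asks `g` to vanish there.
noncomputable def glue (S T : Finset ι) (g h g₀ : (ι → Bool) → ℝ) (ε : ι → Bool) : ℝ :=
  g (truncate S ε) * h (truncate T ε) / g₀ (truncate (S ∩ T) ε)

lemma glue_comm (S T : Finset ι) (g h g₀ : (ι → Bool) → ℝ) :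
    glue S T g h g₀ = glue T S h g g₀ := by
  funext ε
  rw [glue, glue, inter_comm, mul_comm]

lemma glue_nonneg {S T : Finset ι} {g h g₀ : (ι → Bool) → ℝ} (hg : 0 ≤ g) (hh : 0 ≤ h)
    (hg₀ : 0 ≤ g₀) : 0 ≤ glue S T g h g₀ :=
  fun _ => div_nonneg (mul_nonneg (hg _) (hh _)) (hg₀ _)

variable [Fintype ι]

lemma sum_fiber_truncate_eq_sum_patterns {S T : Finset ι} (hST : S ∪ T = univ)
    (F : (ι → Bool) → ℝ) (δ : ι → Bool) :
    ∑ ε ∈ univ.filter (fun ε => truncate S ε = truncate S δ), F (truncate T ε) =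
      ∑ δ' ∈ (patterns T).filter (fun δ' => truncate (S ∩ T) δ' = truncate (S ∩ T) δ), F δ' := by
  have hT : ∀ j ∉ S, j ∈ T := fun j hj => by
    simpa [hj] using (Finset.ext_iff.1 hST j).2 (mem_univ j)
  refine sum_nbij' (truncate T) (fun δ' => S.piecewise δ δ') ?_ ?_ ?_ ?_ fun _ _ => rfl
  · intro ε hε
    simp only [mem_filter, mem_univ, true_and, mem_patterns] at hε ⊢
    refine ⟨truncate_truncate_of_subset subset_rfl ε, ?_⟩
    rw [truncate_truncate_of_subset inter_subset_right, ← truncate_truncate_of_subset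
      inter_subset_left ε, hε, truncate_truncate_of_subset inter_subset_left]
  · intro δ' _
    simp only [mem_filter, mem_univ, true_and, truncate_eq_truncate_iff]
    exact fun j hj => piecewise_eq_of_mem _ _ _ hj
  · intro ε hε
    have hεδ := truncate_eq_truncate_iff.1 (mem_filter.1 hε).2
    funext j
    by_cases hj : j ∈ S
    · rw [piecewise_eq_of_mem _ _ _ hj, hεδ j hj]
    · rw [piecewise_eq_of_notMem _ _ _ hj, truncate_of_mem (hT j hj)]
  · intro δ' hδ'
    obtain ⟨hpat, hδ'δ⟩ := mem_filter.1 hδ'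
    funext j
    by_cases hjT : j ∈ T
    · rw [truncate_of_mem hjT]
      by_cases hjS : j ∈ S
      · rw [piecewise_eq_of_mem _ _ _ hjS,
          (truncate_eq_truncate_iff.1 hδ'δ j (mem_inter.2 ⟨hjS, hjT⟩)).symm]
      · exact piecewise_eq_of_notMem _ _ _ hjS
    · rw [truncate_of_notMem hjT, ← mem_patterns.1 hpat, truncate_of_notMem hjT]

lemma sum_glue_fiber {S T : Finset ι} (hST : S ∪ T = univ) {g h g₀ : (ι → Bool) → ℝ}
    (hmarg : ∀ δ, ∑ δ' ∈ (patterns T).filter (fun δ' => truncate (S ∩ T) δ' = truncate (S ∩ T) δ),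
      h δ' = g₀ (truncate (S ∩ T) δ))
    (hzero : ∀ δ, g₀ (truncate (S ∩ T) δ) = 0 → g (truncate S δ) = 0) (δ : ι → Bool) :
    ∑ ε ∈ univ.filter (fun ε => truncate S ε = truncate S δ), glue S T g h g₀ ε =
      g (truncate S δ) := by
  have hfiber : ∀ ε ∈ univ.filter (fun ε => truncate S ε = truncate S δ),
      glue S T g h g₀ ε = g (truncate S δ) * h (truncate T ε) / g₀ (truncate (S ∩ T) δ) := by
    intro ε hε
    have hεδ := (mem_filter.1 hε).2
    rw [glue, hεδ, ← truncate_truncate_of_subset inter_subset_left ε, hεδ,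
      truncate_truncate_of_subset inter_subset_left]
  rw [sum_congr rfl hfiber, ← sum_div, ← mul_sum, sum_fiber_truncate_eq_sum_patterns hST, hmarg]
  by_cases h₀ : g₀ (truncate (S ∩ T) δ) = 0
  · rw [h₀, hzero δ h₀, zero_mul, zero_div]
  · exact mul_div_cancel_right₀ _ h₀

end Gluing

section Density

variable {ι B : Type*} [Fintype ι] [BooleanAlgebra B] (φ : BoundedLatticeHom B (Set (ι → Bool)))

open scoped Classical in
noncomputable def densityMeasure (f : (ι → Bool) → ℝ) (x : B) : ℝ :=
  ∑ ε ∈ univ.filter (· ∈ φ x), f ε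

lemma isAdditiveOn_densityMeasure (f : (ι → Bool) → ℝ) (S : Set B) :
    IsAdditiveOn (densityMeasure φ f) S := by
  classical
  intro x _ y _ hxy
  have hdisj : Disjoint (univ.filter (· ∈ φ x)) (univ.filter (· ∈ φ y)) := by
    refine disjoint_filter.2 fun ε _ hx hy => ?_
    have : ε ∈ φ (x ⊓ y) := by rw [map_inf]; exact ⟨hx, hy⟩
    rwa [hxy, map_bot] at this
  rw [densityMeasure, densityMeasure, densityMeasure, ← sum_union hdisj, ← filter_or]
  exact sum_congr (filter_congr fun ε _ => by rw [map_sup]; rfl) fun _ _ => rfl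

lemma densityMeasure_nonneg {f : (ι → Bool) → ℝ} (hf : 0 ≤ f) (x : B) :
    0 ≤ densityMeasure φ f x :=
  sum_nonneg fun ε _ => hf ε

variable {φ}

lemma densityMeasure_atomOf [DecidableEq ι] {A : ι → B} (hφ : ∀ j, φ (A j) = {ε | ε j = true})
    (f : (ι → Bool) → ℝ) (S : Finset ι) (δ : ι → Bool) :
    densityMeasure φ f (atomOf A S δ) =
      ∑ ε ∈ univ.filter (fun ε => truncate S ε = truncate S δ), f ε := by
  classical
  rw [densityMeasure]
  congr 1
  ext ε
  simp [map_atomOf hφ]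

end Density

section Extension

variable {ι B : Type*} [Fintype ι] [DecidableEq ι] [BooleanAlgebra B] {A : ι → B}
  {φ : BoundedLatticeHom B (Set (ι → Bool))} {S T : Finset ι} {m₁ m₂ : B → ℝ}

lemma densityMeasure_glue_eqOn (hφ : ∀ j, φ (A j) = {ε | ε j = true}) (hST : S ∪ T = univ)
    (h₁ : IsMeasureOn m₁ (BooleanSubalgebra.closure (A '' S)))
    (h₂ : IsAdditiveOn m₂ (BooleanSubalgebra.closure (A '' T)))
    (hagree : ∀ δ, m₂ (atomOf A (S ∩ T) δ) = m₁ (atomOf A (S ∩ T) δ)) :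
    Set.EqOn (densityMeasure φ (glue S T (m₁ ∘ atomOf A S) (m₂ ∘ atomOf A T)
      (m₁ ∘ atomOf A (S ∩ T)))) m₁ (BooleanSubalgebra.closure (A '' S)) := by
  have hmarg (δ : ι → Bool) :
      ∑ δ' ∈ (patterns T).filter (fun δ' => truncate (S ∩ T) δ' = truncate (S ∩ T) δ),
        m₂ (atomOf A T δ') = m₁ (atomOf A (S ∩ T) (truncate (S ∩ T) δ)) := by
    rw [atomOf_truncate, ← hagree, h₂.map_atomOf_eq_sum hφ inter_subset_right]
  have hzero (δ : ι → Bool) (h₀ : m₁ (atomOf A (S ∩ T) (truncate (S ∩ T) δ)) = 0) :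
      m₁ (atomOf A S (truncate S δ)) = 0 := by
    rw [atomOf_truncate] at h₀ ⊢
    exact le_antisymm (h₀ ▸ h₁.mono (atomOf_mem_closure S δ)
      (atomOf_mem_closure_of_subset inter_subset_left δ) (atomOf_anti inter_subset_left δ))
      (h₁.1 _ (atomOf_mem_closure S δ))
  refine IsAdditiveOn.eqOn_of_atomOf hφ (isAdditiveOn_densityMeasure φ _ _) h₁.2.1 fun δ => ?_
  rw [densityMeasure_atomOf hφ, sum_glue_fiber hST hmarg hzero, Function.comp_apply,
    atomOf_truncate]

theorem exists_isNormMeasure_eqOn_eqOn (hφ : ∀ j, φ (A j) = {ε | ε j = true})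
    (hST : S ∪ T = univ) (h₁ : IsMeasureOn m₁ (BooleanSubalgebra.closure (A '' S)))
    (h₂ : IsMeasureOn m₂ (BooleanSubalgebra.closure (A '' T)))
    (hagree : ∀ δ, m₁ (atomOf A (S ∩ T) δ) = m₂ (atomOf A (S ∩ T) δ)) :
    ∃ μ : B → ℝ, IsNormMeasure μ ∧ Set.EqOn μ m₁ (BooleanSubalgebra.closure (A '' S)) ∧
      Set.EqOn μ m₂ (BooleanSubalgebra.closure (A '' T)) := by
  set f := glue S T (m₁ ∘ atomOf A S) (m₂ ∘ atomOf A T) (m₁ ∘ atomOf A (S ∩ T))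
  have hf : f = glue T S (m₂ ∘ atomOf A T) (m₁ ∘ atomOf A S) (m₂ ∘ atomOf A (T ∩ S)) := by
    rw [glue_comm, inter_comm, show m₂ ∘ atomOf A (S ∩ T) = m₁ ∘ atomOf A (S ∩ T) from
      funext fun δ => (hagree δ).symm]
  have hS := densityMeasure_glue_eqOn hφ hST h₁ h₂.2.1 fun δ => (hagree δ).symm
  have hT := hf ▸ densityMeasure_glue_eqOn hφ (union_comm S T ▸ hST) h₂ h₁.2.1
    fun δ => by rw [inter_comm]; exact hagree δ
  have hf_nonneg : 0 ≤ f := glue_nonneg (fun δ => h₁.1 _ (atomOf_mem_closure S δ))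
    (fun δ => h₂.1 _ (atomOf_mem_closure T δ))
    (fun δ => h₁.1 _ (atomOf_mem_closure_of_subset inter_subset_left δ))
  refine ⟨densityMeasure φ f, ⟨densityMeasure_nonneg φ hf_nonneg,
    fun x y => isAdditiveOn_densityMeasure φ f Set.univ x trivial y trivial, ?_⟩, hS, hT⟩
  rw [hS BooleanSubalgebra.top_mem, h₁.2.2]

end Extension

theorem stmt10_general {n i k : ℕ} (hik : i ≤ k)
    (B : Type*) [BooleanAlgebra B] (A : Fin n → B) (hA : IsFreelyGeneratedBy A)
    (μ1 μ2 : B → ℝ)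
    (h1 : IsMeasureOn μ1 (subalgClosure (A '' {j : Fin n | (j : ℕ) < k})))
    (h2 : IsMeasureOn μ2 (subalgClosure (A '' {j : Fin n | i ≤ (j : ℕ) + 1})))
    (hagree : ∀ x ∈ subalgClosure (A '' {j : Fin n | (j : ℕ) < k}) ∩
        subalgClosure (A '' {j : Fin n | i ≤ (j : ℕ) + 1}), μ1 x = μ2 x) :
    ∃ μ : B → ℝ, IsNormMeasure μ ∧
      (∀ x ∈ subalgClosure (A '' {j : Fin n | (j : ℕ) < k}), μ x = μ1 x) ∧
      (∀ x ∈ subalgClosure (A '' {j : Fin n | i ≤ (j : ℕ) + 1}), μ x = μ2 x) := by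
  obtain ⟨φ, hφ, -⟩ := hA (Set (Fin n → Bool)) fun j => {ε | ε j = true}
  set S := univ.filter fun j : Fin n => (j : ℕ) < k
  set T := univ.filter fun j : Fin n => i ≤ (j : ℕ) + 1
  have hS : {j : Fin n | (j : ℕ) < k} = S := by simp [S]
  have hT : {j : Fin n | i ≤ (j : ℕ) + 1} = T := by simp [T]
  have hST : S ∪ T = univ := by
    ext j
    simp only [S, T, mem_union, mem_filter, mem_univ, true_and, iff_true]
    omega
  simp only [hS, hT, subalgClosure_eq_closure] at h1 h2 hagree ⊢
  obtain ⟨μ, hμ, hμS, hμT⟩ := exists_isNormMeasure_eqOn_eqOn hφ hST h1 h2 fun δ =>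
    hagree _ ⟨atomOf_mem_closure_of_subset inter_subset_left δ,
      atomOf_mem_closure_of_subset inter_subset_right δ⟩
  exact ⟨μ, hμ, fun x hx => hμS hx, fun x hx => hμT hx⟩

/-- Markov gluing of measures: with `B` free on `A_1, …, A_n`, `B_1` generated by
`A_1, …, A_k` and `B_2` by `A_i, …, A_n` (`1 ≤ i ≤ k ≤ n`), two normalized measures on
`B_1` and `B_2` agreeing on `B_1 ∩ B_2` have a common extension to a normalized measure
on `B`.  Generators are indexed by `Fin n`, so `A_j` is `A ⟨j-1, _⟩`. -/
theorem stmt10 {n i k : ℕ} (hi : 1 ≤ i) (hik : i ≤ k) (hkn : k ≤ n)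
    (B : Type*) [BooleanAlgebra B] (A : Fin n → B) (hA : IsFreelyGeneratedBy A)
    (μ1 μ2 : B → ℝ)
    (h1 : IsMeasureOn μ1 (subalgClosure (A '' {j : Fin n | (j : ℕ) < k})))
    (h2 : IsMeasureOn μ2 (subalgClosure (A '' {j : Fin n | i ≤ (j : ℕ) + 1})))
    (hagree : ∀ x ∈ subalgClosure (A '' {j : Fin n | (j : ℕ) < k}) ∩
        subalgClosure (A '' {j : Fin n | i ≤ (j : ℕ) + 1}), μ1 x = μ2 x) :
    ∃ μ : B → ℝ, IsNormMeasure μ ∧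
      (∀ x ∈ subalgClosure (A '' {j : Fin n | (j : ℕ) < k}), μ x = μ1 x) ∧
      (∀ x ∈ subalgClosure (A '' {j : Fin n | i ≤ (j : ℕ) + 1}), μ x = μ2 x) :=
  stmt10_general hik B A hA μ1 μ2 h1 h2 hagree
end

section
/- (Horn–Tarski) A function f on a Boolean subalgebra S of a Boolean algebra B is a partial measure on S if and only if f is a (normalized) measure on S. -/
/-- Meet of all elements of a list. -/
def meetAll {B : Type*} [BooleanAlgebra B] (l : List B) : B := l.foldr (· ⊓ ·) ⊤

/-- Join of all `k`-fold meets of (increasing) `k`-element sublists of `l`. -/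
def kJoin {B : Type*} [BooleanAlgebra B] (k : ℕ) (l : List B) : B :=
  ((l.sublistsLen k).map meetAll).foldr (· ⊔ ·) ⊥

/-- Horn–Tarski order on sequences: `⟨A_0,…,A_{m−1}⟩ ≤ ⟨B_0,…,B_{n−1}⟩` iff for every
`k < m` the join of all `(k+1)`-fold meets of the `A`'s is below the analogous join for
the `B`'s. -/
def seqLE {B : Type*} [BooleanAlgebra B] (as bs : List B) : Prop :=
  ∀ k : ℕ, k < as.length → kJoin (k + 1) as ≤ kJoin (k + 1) bs

/-- Horn–Tarski partial measure on a subset `S` containing `⊤`. -/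
def IsPartialMeasure {B : Type*} [BooleanAlgebra B] (f : B → ℝ) (S : Set B) : Prop :=
  (⊤ : B) ∈ S ∧ f ⊤ = 1 ∧ (∀ x ∈ S, 0 ≤ f x) ∧
  ∀ as bs : List B, (∀ x ∈ as, x ∈ S) → (∀ x ∈ bs, x ∈ S) → seqLE as bs →
    (as.map f).sum ≤ (bs.map f).sum

/-- Horn–Tarski exterior measure of `x` with respect to a partial measure `f` on `S`. -/
noncomputable def extMeasure {B : Type*} [BooleanAlgebra B] (f : B → ℝ) (S : Set B)
    (x : B) : ℝ :=
  sInf {ξ : ℝ | ∃ (m : ℕ) (as bs : List B), 0 < m ∧ (∀ y ∈ as, y ∈ S) ∧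
    (∀ y ∈ bs, y ∈ S) ∧ seqLE (bs ++ List.replicate m x) as ∧
    ξ = ((as.map f).sum - (bs.map f).sum) / m}

/-- Horn–Tarski interior measure of `x` with respect to a partial measure `f` on `S`. -/
noncomputable def intMeasure {B : Type*} [BooleanAlgebra B] (f : B → ℝ) (S : Set B)
    (x : B) : ℝ :=
  sSup {ξ : ℝ | ∃ (m : ℕ) (as bs : List B), 0 < m ∧ (∀ y ∈ as, y ∈ S) ∧
    (∀ y ∈ bs, y ∈ S) ∧ seqLE as (bs ++ List.replicate m x) ∧
    ξ = ((as.map f).sum - (bs.map f).sum) / m}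

/-- `S` is the carrier of a Boolean subalgebra. -/
def IsSubalgebraSet {B : Type*} [BooleanAlgebra B] (S : Set B) : Prop :=
  (⊤ : B) ∈ S ∧ (⊥ : B) ∈ S ∧ (∀ x ∈ S, xᶜ ∈ S) ∧
  (∀ x ∈ S, ∀ y ∈ S, x ⊓ y ∈ S) ∧ (∀ x ∈ S, ∀ y ∈ S, x ⊔ y ∈ S)

section HT
variable {B : Type*} [BooleanAlgebra B] {S : Set B} {m : B → ℝ}

lemma HT_meetAll_mem (hS : IsSubalgebraSet S) {l : List B} (hl : ∀ x ∈ l, x ∈ S) :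
    meetAll l ∈ S := by
  induction l with
  | nil => exact hS.1
  | cons a l ih =>
    exact hS.2.2.2.1 a (hl a (by simp)) _ (ih fun x hx => hl x (by simp [hx]))

lemma HT_kJoin_mem (hS : IsSubalgebraSet S) {k : ℕ} {l : List B}
    (hl : ∀ x ∈ l, x ∈ S) : kJoin k l ∈ S := by
  unfold kJoin
  have key : ∀ s ∈ (l.sublistsLen k).map meetAll, s ∈ S := by
    intro s hs
    rcases List.mem_map.1 hs with ⟨t, ht, rfl⟩
    have hsub : t.Sublist l := (List.mem_sublistsLen.1 ht).1
    exact HT_meetAll_mem hS fun x hx => hl x (hsub.subset hx)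
  have gen : ∀ L : List B, (∀ s ∈ L, s ∈ S) → L.foldr (· ⊔ ·) ⊥ ∈ S := by
    intro L hL
    induction L with
    | nil => exact hS.2.1
    | cons a t ih =>
      exact hS.2.2.2.2 a (hL a (by simp)) _ (ih fun s hs => hL s (by simp [hs]))
  exact gen _ key

lemma HT_m_bot (hS : IsSubalgebraSet S) (hm : IsMeasureOn m S) : m ⊥ = 0 := by
  have := hm.2.1 ⊥ hS.2.1 ⊥ hS.2.1 (by simp)
  simp at this
  linarith

lemma HT_modular (hS : IsSubalgebraSet S) (hm : IsMeasureOn m S)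
    {x y : B} (hx : x ∈ S) (hy : y ∈ S) :
    m (x ⊔ y) = m x + m y - m (x ⊓ y) := by
  have hxc : xᶜ ∈ S := hS.2.2.1 x hx
  have hxcy : xᶜ ⊓ y ∈ S := hS.2.2.2.1 _ hxc _ hy
  have hxy : x ⊓ y ∈ S := hS.2.2.2.1 _ hx _ hy
  have h1 : x ⊓ (xᶜ ⊓ y) = ⊥ := by rw [← inf_assoc]; simp
  have h2 : (x ⊓ y) ⊓ (xᶜ ⊓ y) = ⊥ := by
    calc (x ⊓ y) ⊓ (xᶜ ⊓ y) = (x ⊓ xᶜ) ⊓ (y ⊓ y) := by ac_rfl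
    _ = ⊥ := by simp
  have e1 : x ⊔ (xᶜ ⊓ y) = x ⊔ y := by
    rw [sup_inf_left]; simp
  have e2 : (x ⊓ y) ⊔ (xᶜ ⊓ y) = y := by
    rw [← inf_sup_right]; simp
  have a1 := hm.2.1 x hx _ hxcy h1
  have a2 := hm.2.1 _ hxy _ hxcy h2
  rw [e1] at a1; rw [e2] at a2
  linarith

lemma HT_mono (hS : IsSubalgebraSet S) (hm : IsMeasureOn m S)
    {x y : B} (hx : x ∈ S) (hy : y ∈ S) (hxy : x ≤ y) : m x ≤ m y := by
  have hxcy : xᶜ ⊓ y ∈ S := hS.2.2.2.1 _ (hS.2.2.1 x hx) _ hy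
  have hd : x ⊓ (xᶜ ⊓ y) = ⊥ := by rw [← inf_assoc]; simp
  have he : x ⊔ (xᶜ ⊓ y) = y := by
    rw [sup_inf_left]
    simp [sup_eq_right.mpr hxy]
  have := hm.2.1 x hx _ hxcy hd
  rw [he] at this
  have h0 := hm.1 _ hxcy
  linarith

lemma HT_kJoin_zero (l : List B) : kJoin 0 l = ⊤ := by simp [kJoin, meetAll]

lemma HT_kJoin_of_length_lt {k : ℕ} {l : List B} (h : l.length < k) : kJoin k l = ⊥ := by
  simp [kJoin, List.sublistsLen_of_length_lt h]

lemma HT_foldr_sup_map_inf (a : B) (xs : List B) :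
    (xs.map (a ⊓ ·)).foldr (· ⊔ ·) ⊥ = a ⊓ xs.foldr (· ⊔ ·) ⊥ := by
  induction xs with
  | nil => simp
  | cons x xs ih => simp [ih, inf_sup_left]

lemma HT_kJoin_succ_cons (k : ℕ) (a : B) (l : List B) :
    kJoin (k + 1) (a :: l) = kJoin (k + 1) l ⊔ (a ⊓ kJoin k l) := by
  simp only [kJoin, List.sublistsLen_succ_cons, List.map_append, List.foldr_append,
    List.map_map]
  have h1 : ∀ (ys : List (List B)) (z : B),
      (ys.map meetAll).foldr (· ⊔ ·) z = (ys.map meetAll).foldr (· ⊔ ·) ⊥ ⊔ z := by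
    intro ys z
    induction ys with
    | nil => simp
    | cons y ys ih => simp [ih, sup_assoc]
  rw [h1]
  congr 1
  have h2 : (meetAll ∘ List.cons a : List B → B) = (fun s => a ⊓ meetAll s) := by
    funext s; rfl
  rw [h2]
  have h3 := HT_foldr_sup_map_inf a ((l.sublistsLen k).map meetAll)
  rw [List.map_map] at h3
  exact h3

lemma HT_kJoin_antitone (k : ℕ) (l : List B) : kJoin (k + 1) l ≤ kJoin k l := by
  induction l generalizing k with
  | nil => rw [HT_kJoin_of_length_lt (by simp)]; exact bot_le
  | cons a l ih =>
    cases k with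
    | zero => simp [HT_kJoin_zero]
    | succ k =>
      rw [HT_kJoin_succ_cons, HT_kJoin_succ_cons]
      exact sup_le_sup (ih (k + 1)) (inf_le_inf_left a (ih k))

lemma HT_sum_eq (hS : IsSubalgebraSet S) (hm : IsMeasureOn m S)
    (l : List B) (hl : ∀ x ∈ l, x ∈ S) :
    (l.map m).sum = ∑ k ∈ Finset.range l.length, m (kJoin (k + 1) l) := by
  induction l with
  | nil => simp
  | cons a l ih =>
    have haS : a ∈ S := hl a (by simp)
    have hlS : ∀ x ∈ l, x ∈ S := fun x hx => hl x (by simp [hx])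
    have hbot := HT_m_bot hS hm
    have term : ∀ k, m (kJoin (k + 1) (a :: l)) =
        m (kJoin (k + 1) l) + (m (a ⊓ kJoin k l) - m (a ⊓ kJoin (k + 1) l)) := by
      intro k
      rw [HT_kJoin_succ_cons]
      have hu : kJoin (k + 1) l ∈ S := HT_kJoin_mem hS hlS
      have hv : a ⊓ kJoin k l ∈ S := hS.2.2.2.1 a haS _ (HT_kJoin_mem hS hlS)
      have hmod := HT_modular hS hm hu hv
      have hinf : kJoin (k + 1) l ⊓ (a ⊓ kJoin k l) = a ⊓ kJoin (k + 1) l := by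
        rw [inf_left_comm]
        congr 1
        exact inf_eq_left.mpr (HT_kJoin_antitone k l)
      rw [hinf] at hmod
      linarith
    simp only [List.map_cons, List.sum_cons, List.length_cons]
    rw [ih hlS]
    have : ∑ k ∈ Finset.range (l.length + 1), m (kJoin (k + 1) (a :: l)) =
        ∑ k ∈ Finset.range (l.length + 1), m (kJoin (k + 1) l) +
        ∑ k ∈ Finset.range (l.length + 1),
          (m (a ⊓ kJoin k l) - m (a ⊓ kJoin (k + 1) l)) := by
      rw [← Finset.sum_add_distrib]
      exact Finset.sum_congr rfl fun k _ => term k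
    rw [this, Finset.sum_range_sub' (fun k => m (a ⊓ kJoin k l)),
      Finset.sum_range_succ, HT_kJoin_of_length_lt (by omega), hbot,
      HT_kJoin_zero]
    simp [hbot]
    ring

end HT



/-- Horn–Tarski: a function on (the carrier of) a Boolean subalgebra `S` of `B` is a
partial measure on `S` iff it is a normalized measure on `S`. -/
theorem stmt17 (B : Type*) [BooleanAlgebra B] (S : Set B) (hS : IsSubalgebraSet S)
    (f : B → ℝ) :
    IsPartialMeasure f S ↔ IsMeasureOn f S := by
  constructor
  · rintro ⟨hT, h1, hnn, hmain⟩
    refine ⟨hnn, ?_, h1⟩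
    intro x hx y hy hxy
    have hxyS : x ⊔ y ∈ S := hS.2.2.2.2 x hx y hy
    have e1 : kJoin 1 [x ⊔ y] = x ⊔ y := by
      simp [kJoin, meetAll]
    have e2 : kJoin 1 [x, y] = x ⊔ y := by
      simp [kJoin, meetAll, sup_comm]
    have e3 : kJoin 2 [x, y] = x ⊓ y := by
      simp [kJoin, meetAll]
    have e4 : kJoin 2 [x ⊔ y] = ⊥ := HT_kJoin_of_length_lt (by simp)
    have s1 : seqLE [x ⊔ y] [x, y] := by
      intro k hk
      obtain rfl : k = 0 := by simp at hk; omega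
      rw [e1, e2]
    have s2 : seqLE [x, y] [x ⊔ y] := by
      intro k hk
      have hk' : k = 0 ∨ k = 1 := by simp at hk; omega
      rcases hk' with rfl | rfl
      · rw [e1, e2]
      · rw [e3, e4, hxy]
    have le1 := hmain [x ⊔ y] [x, y] (by simp [hxyS]) (by simp [hx, hy]) s1
    have le2 := hmain [x, y] [x ⊔ y] (by simp [hx, hy]) (by simp [hxyS]) s2
    simp only [List.map_cons, List.map_nil, List.sum_cons, List.sum_nil] at le1 le2
    linarith
  · intro hm
    refine ⟨hS.1, hm.2.2, hm.1, ?_⟩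
    intro as bs hA hB hle
    have hbot := HT_m_bot hS hm
    rw [HT_sum_eq hS hm as hA, HT_sum_eq hS hm bs hB]
    set N := max as.length bs.length with hN
    rw [show (∑ k ∈ Finset.range as.length, f (kJoin (k + 1) as)) =
        ∑ k ∈ Finset.range N, f (kJoin (k + 1) as) from by
      refine Finset.sum_subset (Finset.range_subset_range.mpr (le_max_left _ _)) ?_
      intro k hk hk2
      simp only [Finset.mem_range] at hk hk2
      rw [HT_kJoin_of_length_lt (by omega), hbot]]
    rw [show (∑ k ∈ Finset.range bs.length, f (kJoin (k + 1) bs)) =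
        ∑ k ∈ Finset.range N, f (kJoin (k + 1) bs) from by
      refine Finset.sum_subset (Finset.range_subset_range.mpr (le_max_right _ _)) ?_
      intro k hk hk2
      simp only [Finset.mem_range] at hk hk2
      rw [HT_kJoin_of_length_lt (by omega), hbot]]
    refine Finset.sum_le_sum fun k _ => ?_
    by_cases hk : k < as.length
    · exact HT_mono hS hm (HT_kJoin_mem hS hA) (HT_kJoin_mem hS hB) (hle k hk)
    · rw [HT_kJoin_of_length_lt (by omega), hbot]
      exact hm.1 _ (HT_kJoin_mem hS hB)
end

section
/- (Horn–Tarski extension theorem, finite case) Every partial measure f on a subset S of a finite Boolean algebra B extends to a normalized measure μ on B with μ|_S = f. -/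
/-!
Every probability vector `w` on the atoms of a finite Boolean algebra gives the normalized measure
`x ↦ ∑_{a ≤ x} w a`, so it suffices to put `f|S` in the image of the standard simplex under this
linear map. Otherwise a separating hyperplane yields real coefficients `c` on `S` with
`∑_{s ≥ a} c s ≥ 0` for every atom `a` but `∑ c s f s < 0`. Scaling by a large `N` and rounding up
makes `c` integral and keeps both inequalities (as `f ≥ 0`, rounding adds at most `∑ s, f s`). Its positive and negative parts then become two
lists such that every atom lies below at least as many entries of the second list as of the first;
since an atom lies below the join of the `k`-fold meets of a list iff it lies below at least `k` of
its entries, this is the Horn–Tarski comparison of the two lists, and the partial-measure inequality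
contradicts `∑ c s f s < 0`.
-/

open Finset

theorem IsAtom.le_sup_iff {B : Type*} [DistribLattice B] [OrderBot B] {a x y : B}
    (ha : IsAtom a) : a ≤ x ⊔ y ↔ a ≤ x ∨ a ≤ y := by
  refine ⟨fun h => ?_, fun h => h.elim le_sup_of_le_left le_sup_of_le_right⟩
  by_contra! hxy
  exact ha.not_le_iff_disjoint.2 ((ha.not_le_iff_disjoint.1 hxy.1).sup_right
    (ha.not_le_iff_disjoint.1 hxy.2)) h

theorem IsAtom.le_foldr_sup_iff {B : Type*} [DistribLattice B] [OrderBot B] {a : B}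
    (ha : IsAtom a) (l : List B) : a ≤ l.foldr (· ⊔ ·) ⊥ ↔ ∃ y ∈ l, a ≤ y := by
  induction l with
  | nil => simp [ha.1]
  | cons x l ih => simp [ha.le_sup_iff, ih]

section Counting

variable {B : Type*} [BooleanAlgebra B]

theorem le_meetAll_iff {a : B} {l : List B} : a ≤ meetAll l ↔ ∀ y ∈ l, a ≤ y := by
  induction l with
  | nil => simp [meetAll]
  | cons x l ih => simp_all [meetAll]

theorem IsAtom.le_kJoin_iff [DecidableLE B] {a : B} (ha : IsAtom a) (k : ℕ) (l : List B) :
    a ≤ kJoin k l ↔ k ≤ l.countP (a ≤ ·) := by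
  simp only [kJoin, ha.le_foldr_sup_iff, List.mem_map, List.mem_sublistsLen]
  constructor
  · rintro ⟨_, ⟨m, ⟨hml, rfl⟩, rfl⟩, ham⟩
    rw [le_meetAll_iff] at ham
    calc m.length = m.countP (a ≤ ·) := (List.countP_eq_length.2 (by simpa using ham)).symm
      _ ≤ l.countP (a ≤ ·) := hml.countP_le
  · intro hk
    have htake := List.take_sublist k (l.filter (a ≤ ·))
    refine ⟨_, ⟨_, ⟨htake.trans List.filter_sublist, ?_⟩, rfl⟩, le_meetAll_iff.2 fun y hy => ?_⟩
    · rw [List.length_take, ← List.countP_eq_length_filter]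
      omega
    · simpa using (List.mem_filter.1 (htake.subset hy)).2

theorem seqLE_of_forall_atom_countP_le [Finite B] [DecidableLE B] {as bs : List B}
    (h : ∀ a, IsAtom a → as.countP (a ≤ ·) ≤ bs.countP (a ≤ ·)) : seqLE as bs :=
  fun _ _ => BooleanAlgebra.le_iff_atom_le_imp.2 fun a ha hle =>
    (ha.le_kJoin_iff _ _).2 (((ha.le_kJoin_iff _ _).1 hle).trans (h a ha))

end Counting

section MultList

variable {ι B : Type*} [Fintype ι]

noncomputable def multList (n : ι → ℕ) (v : ι → B) : List B :=
  (univ : Finset ι).toList.flatMap fun i => List.replicate (n i) (v i)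

theorem mem_multList {n : ι → ℕ} {v : ι → B} {x : B} (hx : x ∈ multList n v) :
    ∃ i, v i = x := by
  obtain ⟨i, -, hi⟩ := List.mem_flatMap.1 hx
  exact ⟨i, (List.eq_of_mem_replicate hi).symm⟩

theorem countP_multList (n : ι → ℕ) (v : ι → B) (p : B → Prop) [DecidablePred p] :
    (multList n v).countP (p ·) = ∑ i with p (v i), n i := by
  simp [multList, List.countP_flatMap, Function.comp_def, sum_filter, List.countP_replicate]

theorem sum_map_multList (n : ι → ℕ) (v : ι → B) (f : B → ℝ) :
    ((multList n v).map f).sum = ∑ i, n i * f (v i) := by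
  simp [multList, List.flatMap_def, List.sum_flatten, List.map_flatten, Function.comp_def]

end MultList

section PartialMeasure

variable {B : Type*} [BooleanAlgebra B] [Finite B] [DecidableLE B] {f : B → ℝ} {S : Set B}
  [Fintype S]

theorem IsPartialMeasure.sum_int_mul_nonneg (hf : IsPartialMeasure f S) (c : S → ℤ)
    (hc : ∀ a : B, IsAtom a → 0 ≤ ∑ s : S with a ≤ s.1, c s) : 0 ≤ ∑ s, c s * f s := by
  set p : S → ℕ := fun s => (c s).toNat
  set q : S → ℕ := fun s => (-c s).toNat
  have hpq (s : S) : (p s : ℤ) - q s = c s := Int.toNat_sub_toNat_neg _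
  have hS (n : S → ℕ) : ∀ x ∈ multList n (Subtype.val : S → B), x ∈ S := by
    intro x hx
    obtain ⟨s, rfl⟩ := mem_multList hx
    exact s.2
  have hle : seqLE (multList q (Subtype.val : S → B)) (multList p Subtype.val) := by
    refine seqLE_of_forall_atom_countP_le fun a ha => ?_
    rw [countP_multList, countP_multList, ← Int.ofNat_le, ← sub_nonneg]
    push_cast
    rw [← sum_sub_distrib]
    simpa only [hpq] using hc a ha
  obtain ⟨-, -, -, hmono⟩ := hf
  have hsum := hmono _ _ (hS q) (hS p) hle
  rw [sum_map_multList, sum_map_multList, ← sub_nonneg, ← sum_sub_distrib] at hsum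
  convert hsum using 2 with s
  rw [← sub_mul, ← hpq s]
  push_cast
  ring

theorem IsPartialMeasure.sum_mul_nonneg (hf : IsPartialMeasure f S) (c : S → ℝ)
    (hc : ∀ a : B, IsAtom a → 0 ≤ ∑ s : S with a ≤ s.1, c s) : 0 ≤ ∑ s, c s * f s := by
  by_contra! hneg
  have hf0 (s : S) : 0 ≤ f s := hf.2.2.1 s s.2
  obtain ⟨N, hN⟩ := exists_nat_gt ((∑ s : S, f s) / -∑ s, c s * f s)
  have hN0 : (0 : ℝ) ≤ N :=
    (div_nonneg (sum_nonneg fun s _ => hf0 s) (by linarith)).trans hN.le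
  rw [div_lt_iff₀ (by linarith)] at hN
  have hround := hf.sum_int_mul_nonneg (fun s => ⌈N * c s⌉) fun a ha => by
    have h := mul_nonneg hN0 (hc a ha)
    rw [mul_sum] at h
    exact_mod_cast h.trans (sum_le_sum fun s _ => Int.le_ceil _)
  have hup : ∑ s, (⌈N * c s⌉ : ℝ) * f s ≤ N * ∑ s, c s * f s + ∑ s : S, f s := by
    rw [mul_sum, ← sum_add_distrib]
    gcongr with s
    nlinarith [Int.ceil_lt_add_one (N * c s), hf0 s]
  linarith

end PartialMeasure

section AtomMeasure

open scoped Classical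

variable {B : Type*} [BooleanAlgebra B] [Fintype B]

noncomputable def atomMeasure : ({a : B // IsAtom a} → ℝ) →ₗ[ℝ] B → ℝ where
  toFun w x := ∑ a with a.1 ≤ x, w a
  map_add' w w' := by ext x; simp [sum_add_distrib]
  map_smul' r w := by ext x; simp [mul_sum]

theorem atomMeasure_apply (w : {a : B // IsAtom a} → ℝ) (x : B) :
    atomMeasure w x = ∑ a with a.1 ≤ x, w a := rfl

theorem atomMeasure_single (a : {a : B // IsAtom a}) (x : B) :
    atomMeasure (Pi.single a 1) x = if a.1 ≤ x then 1 else 0 := by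
  simp [atomMeasure_apply, Pi.single_apply]

theorem isNormMeasure_atomMeasure {w : {a : B // IsAtom a} → ℝ}
    (hw : w ∈ stdSimplex ℝ {a : B // IsAtom a}) : IsNormMeasure (atomMeasure w) := by
  refine ⟨fun x => sum_nonneg fun a _ => hw.1 a, fun x y hxy => ?_, by
    simpa [atomMeasure_apply] using hw.2⟩
  have hdisj : Disjoint (univ.filter fun a : {a : B // IsAtom a} => a.1 ≤ x)
      (univ.filter fun a => a.1 ≤ y) :=
    disjoint_filter.2 fun a _ hax hay => a.2.1 (le_bot_iff.1 (hxy ▸ le_inf hax hay))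
  rw [atomMeasure_apply, atomMeasure_apply, atomMeasure_apply, ← sum_union hdisj, ← filter_or]
  exact sum_congr (filter_congr fun a _ => a.2.le_sup_iff) fun _ _ => rfl

variable {f : B → ℝ} {S : Set B}

theorem IsPartialMeasure.mem_image_stdSimplex (hf : IsPartialMeasure f S) :
    (fun s : S => f s) ∈
      (LinearMap.funLeft ℝ ℝ (Subtype.val : S → B) ∘ₗ atomMeasure) ''
        stdSimplex ℝ {a : B // IsAtom a} := by
  set L := LinearMap.funLeft ℝ ℝ (Subtype.val : S → B) ∘ₗ atomMeasure
  by_contra hK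
  obtain ⟨φ, u, hφf, hφK⟩ := geometric_hahn_banach_point_closed
    ((convex_stdSimplex ℝ _).linear_image L)
    ((isCompact_stdSimplex ℝ _).image (L.continuous_of_finiteDimensional)).isClosed hK
  -- `f` and every point of the image take the value `1` at `⊤`, so this makes the separation
  -- homogeneous.
  set ψ : (S → ℝ) →ₗ[ℝ] ℝ := φ.toLinearMap - u • LinearMap.proj ⟨⊤, hf.1⟩
  set c : S → ℝ := fun s => ψ fun t => if s = t then 1 else 0
  have hψ (y : S → ℝ) : ψ y = ∑ s, c s * y s := by
    simp only [ψ.pi_apply_eq_sum_univ y, smul_eq_mul, mul_comm, c]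
  refine (hf.sum_mul_nonneg c fun a ha => ?_).not_gt ?_
  · have hvertex : u < φ fun s => if a ≤ s.1 then 1 else 0 := by
      convert hφK _ ⟨_, single_mem_stdSimplex ℝ ⟨a, ha⟩, rfl⟩ using 2
      ext s
      simp [L, atomMeasure_single]
    have hψvertex : ∑ s : S with a ≤ s.1, c s = (φ fun s => if a ≤ s.1 then 1 else 0) - u := by
      simpa [ψ, ← sum_filter] using (hψ fun s => if a ≤ s.1 then 1 else 0).symm
    linarith
  · have hψf : ψ (fun s => f s) = φ (fun s => f s) - u := by simp [ψ, hf.2.1]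
    rw [hψ] at hψf
    linarith

end AtomMeasure

/-- Horn–Tarski extension theorem (finite case): every partial measure on a subset `S` of a
finite Boolean algebra `B` extends to a normalized measure on `B`. -/
theorem stmt18 (B : Type*) [BooleanAlgebra B] [Fintype B] (S : Set B) (f : B → ℝ)
    (hf : IsPartialMeasure f S) :
    ∃ μ : B → ℝ, IsNormMeasure μ ∧ ∀ x ∈ S, μ x = f x := by
  obtain ⟨w, hw, hwf⟩ := hf.mem_image_stdSimplex
  exact ⟨atomMeasure w, isNormMeasure_atomMeasure hw, fun x hx => congrFun hwf ⟨x, hx⟩⟩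
end
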